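/- arXiv:2008.03816 — 4 statements merged into one kernel-verified Lean document; each statement's English description precedes it below -/
import Mathlib

section
/- Let 𝒫 be a collection of linear contractions of L¹(𝕋) preserving the space of functions of bounded variation and satisfying a uniform Lasota–Yorke inequality: there are ρ ∈ (0,1) and C > 0 with |Pf|_v ≤ ρ|f|_v + C‖f‖₁ for all P ∈ 𝒫 and all BV functions f. Let {P_n}_{n≥1} ⊂ 𝒫 be a sequence satisfying exponential mixing on mean-zero BV functions: there are D > 0 and θ ∈ (0,1) such that |P_{m+l} ⋯ P_{m+1} f|_v ≤ Dθ^l |f|_v for all m ≥ 0, l ≥ 1 and all f ∈ 𝒱₀. Then for every ε > 0 there exist an integer q(ε) ≥ 1 and δ(ε) > 0 such that for any operators R_1, …, R_{q(ε)} ∈ 𝒫 with d₁(R_k, P_k) < δ(ε) for each 1 ≤ k ≤ q(ε), one has ‖R_{q(ε)} ⋯ R_1 f‖₁ ≤ ε |f|_v for every f ∈ 𝒱₀. -/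
open MeasureTheory Set Filter
open scoped ENNReal NNReal

attribute [local instance] Classical.propDecidable

noncomputable section

namespace DRW

/-- The unit circle `𝕋 = ℝ/ℤ`. -/
abbrev T1 := UnitAddCircle

/-- `F : ℝ → ℝ` is a lift of the circle map `T : 𝕋 → 𝕋`. -/
def IsLift (T : T1 → T1) (F : ℝ → ℝ) : Prop :=
  ∀ x : ℝ, T (x : T1) = ((F x : ℝ) : T1)

/-- `T` is a `C^{1+Lip}` circle map with `γ ≤ |T′| ≤ K` and `Lip(T′) ≤ K₁`. -/
def ExpandingC1Lip (T : T1 → T1) (γ K K₁ : ℝ) : Prop :=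
  ∃ F : ℝ → ℝ, IsLift T F ∧ Differentiable ℝ F ∧
    (∀ x, γ ≤ |deriv F x| ∧ |deriv F x| ≤ K) ∧
    LipschitzWith (Real.toNNReal K₁) (deriv F)

/-- `W` is the (half-open) arc starting at `a` of length `l`. -/
def IsArc (W : Set T1) (a l : ℝ) : Prop :=
  0 < l ∧ l ≤ 1 ∧ W = (fun x : ℝ => (x : T1)) '' Set.Ico a (a + l)

/-- The induced map `G_n` on the circle. -/
def inducedMap (T : ℤ → T1 → T1) (W : ℤ → Set T1) (n : ℤ) (x : T1) : T1 :=
  if x ∈ W n then T n (T (n - 1) (T n x)) else T n x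

/-- The time `r_n` spent to move from level `n` to level `n+1`. -/
def stepTime (W : ℤ → Set T1) (n : ℤ) (x : T1) : ℝ :=
  if x ∈ W n then 3 else 1

/-- `orbitMap T W k = G_{k-1} ∘ ⋯ ∘ G_0`. -/
def orbitMap (T : ℤ → T1 → T1) (W : ℤ → Set T1) : ℕ → T1 → T1
  | 0 => id
  | k + 1 => inducedMap T W k ∘ orbitMap T W k

/-- Hitting time of level `n`: `τ_n(x) = ∑_{k=0}^{n-1} r_k(G_{k-1} ∘ ⋯ ∘ G_0 x)`. -/
def hitTime (T : ℤ → T1 → T1) (W : ℤ → Set T1) (n : ℕ) (x : T1) : ℝ :=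
  ∑ k ∈ Finset.range n, stepTime W k (orbitMap T W k x)

/-- `E(τ_n)`. -/
def meanHit (T : ℤ → T1 → T1) (W : ℤ → Set T1) (n : ℕ) : ℝ :=
  ∫ x : T1, hitTime T W n x

/-- `Var(τ_n)`. -/
def varHit (T : ℤ → T1 → T1) (W : ℤ → Set T1) (n : ℕ) : ℝ :=
  (∫ x : T1, (hitTime T W n x) ^ 2) - (meanHit T W n) ^ 2

/-- Convergence in distribution to the standard normal law `N(0,1)`. -/
def TendstoNormal {Ω : Type*} [MeasurableSpace Ω] (μ : Measure Ω) (X : ℕ → Ω → ℝ) : Prop :=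
  ∀ t : ℝ, Tendsto (fun n => (μ {ω | X n ω ≤ t}).toReal) atTop
    (nhds ((ProbabilityTheory.gaussianReal 0 1 (Set.Iic t)).toReal))

/-- The CLT for hitting times: `(τ_n − E(τ_n))/√Var(τ_n) ⇒ N(0,1)`
with `x` uniformly distributed on `𝕋`. -/
def HitCLT (T : ℤ → T1 → T1) (W : ℤ → Set T1) : Prop :=
  TendstoNormal (volume : Measure T1) fun n x =>
    (hitTime T W n x - meanHit T W n) / Real.sqrt (varHit T W n)

/-- Ballisticity gate conditions: `T_n(W_n) ∩ W_{n−1} = ∅` and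
`T_{n−1}(T_n(W_n)) ∩ W_n = ∅`. -/
def GateCond (T : ℤ → T1 → T1) (W : ℤ → Set T1) : Prop :=
  ∀ n : ℤ, (T n '' W n) ∩ W (n - 1) = ∅ ∧ (T (n - 1) '' (T n '' W n)) ∩ W n = ∅

/-- Model A. -/
def ModelA (T : ℤ → T1 → T1) (W : ℤ → Set T1) (γ K K₁ c δ₀ : ℝ) : Prop :=
  (∀ n, ExpandingC1Lip (T n) γ K K₁) ∧
  (∀ n, ∃ a l, IsArc (W n) a l ∧ c * δ₀ ≤ l ∧ l ≤ δ₀) ∧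
  GateCond T W

/-- `fwdComp T n j = T_{n+j} ∘ ⋯ ∘ T_{n+1} ∘ (T_n ∘ T_{n-1} ∘ T_n)`. -/
def fwdComp (T : ℤ → T1 → T1) (n : ℤ) : ℕ → T1 → T1
  | 0 => T n ∘ T (n - 1) ∘ T n
  | j + 1 => T (n + j + 1) ∘ fwdComp T n j

/-- Model A′: Model A together with the gate conditions `(4)_N`. -/
def ModelA' (T : ℤ → T1 → T1) (W : ℤ → Set T1) (γ K K₁ c δ₀ : ℝ) (N : ℕ) : Prop :=
  ModelA T W γ K K₁ c δ₀ ∧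
  ∀ (n : ℤ) (k : ℕ), 1 ≤ k → k ≤ N →
    (fwdComp T n (k - 1) '' W n) ∩ W (n + k) = ∅

/-- `‖T − S‖_{C^{1+Lip}} ≤ δ` (via lifts): the `C¹` distance plus the Lipschitz
constant of the difference of the derivatives is at most `δ`. -/
def C1LipClose (T S : T1 → T1) (δ : ℝ) : Prop :=
  ∃ F G : ℝ → ℝ, IsLift T F ∧ IsLift S G ∧ Differentiable ℝ F ∧ Differentiable ℝ G ∧
    ∃ a b c : ℝ, 0 ≤ a ∧ 0 ≤ b ∧ 0 ≤ c ∧ a + b + c ≤ δ ∧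
      (∀ x, |F x - G x| ≤ a) ∧ (∀ x, |deriv F x - deriv G x| ≤ b) ∧
      LipschitzWith (Real.toNNReal c) fun x => deriv F x - deriv G x

/-- Model B relative to the fixed pair `(T̄, W̄)`. -/
def ModelB (T : ℤ → T1 → T1) (W : ℤ → Set T1) (Tbar : T1 → T1) (Wbar : Set T1)
    (δ₀ : ℝ) : Prop :=
  (∀ n, ∃ a l, IsArc (W n) a l) ∧
  (∀ n, C1LipClose (T n) Tbar δ₀) ∧
  (∀ n, Metric.hausdorffDist (W n) Wbar ≤ δ₀)

/-- One step of the dynamical walk `F(x,z)`. -/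
def walkStep (T : ℤ → T1 → T1) (W : ℤ → Set T1) (p : T1 × ℤ) : T1 × ℤ :=
  (T p.2 p.1, if p.1 ∈ W p.2 then p.2 - 1 else p.2 + 1)

/-- `z_n`, the `ℤ`-coordinate of the walk after `n` steps started at `(x,0)`. -/
def zCoord (T : ℤ → T1 → T1) (W : ℤ → Set T1) (n : ℕ) (x : T1) : ℤ :=
  ((walkStep T W)^[n] (x, 0)).2

/-- The hitting time of level `m`, as the least `t` with `z_t = m`. -/
def hitLevel (T : ℤ → T1 → T1) (W : ℤ → Set T1) (m : ℤ) (x : T1) : ℕ :=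
  sInf {t : ℕ | zCoord T W t x = m}

/-- The scale function `𝒮(z) = E(τ_z)`. -/
def scaleS (T : ℤ → T1 → T1) (W : ℤ → Set T1) (z : ℤ) : ℝ :=
  ∫ x : T1, (hitLevel T W z x : ℝ)

/-- `Var(τ_z)` for the walk hitting times. -/
def varLevel (T : ℤ → T1 → T1) (W : ℤ → Set T1) (z : ℤ) : ℝ :=
  (∫ x : T1, ((hitLevel T W z x : ℝ)) ^ 2) - (scaleS T W z) ^ 2

/-- `𝒵(s) = max{z : 𝒮(z) ≤ s}`. -/
def invScale (T : ℤ → T1 → T1) (W : ℤ → Set T1) (s : ℝ) : ℤ :=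
  sSup {z : ℤ | scaleS T W z ≤ s}

/-- `σ̂_n = √Var(τ_{𝒵(n)})`. -/
def sigmaHat (T : ℤ → T1 → T1) (W : ℤ → Set T1) (n : ℕ) : ℝ :=
  Real.sqrt (varLevel T W (invScale T W (n : ℝ)))

/-- `Gcomp T W i = G_{1,i} = G_i ∘ ⋯ ∘ G_1`. -/
def Gcomp (T : ℤ → T1 → T1) (W : ℤ → Set T1) : ℕ → T1 → T1
  | 0 => id
  | i + 1 => inducedMap T W ((i : ℤ) + 1) ∘ Gcomp T W i

/-- The nonstationary variance
`σ_n² = ∫ (∑_{i=1}^n [τ_i(G_{1,i}x) − ∫ τ_i(G_{1,i}y) dy])² dx`. -/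
def sigmaSq (T : ℤ → T1 → T1) (W : ℤ → Set T1) (n : ℕ) : ℝ :=
  ∫ x : T1, (∑ i ∈ Finset.Icc 1 n,
    (stepTime W (i : ℤ) (Gcomp T W i x) -
      ∫ y : T1, stepTime W (i : ℤ) (Gcomp T W i y))) ^ 2

/-- `ξ` is an iid sequence of labels under `P`. -/
def IIDEnv {Ω : Type*} [MeasurableSpace Ω] {m : ℕ} (P : Measure Ω)
    (ξ : Ω → ℤ → Fin m) : Prop :=
  (∀ n, Measurable fun ω => ξ ω n) ∧
  (ProbabilityTheory.iIndepFun (fun n ω => ξ ω n) P) ∧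
  ∀ i j : ℤ, ProbabilityTheory.IdentDistrib (fun ω => ξ ω i) (fun ω => ξ ω j) P P

/-- The maps of the environment selected by `f`. -/
def envT {m : ℕ} (E : Fin m → (T1 → T1) × Set T1) (f : ℤ → Fin m) : ℤ → T1 → T1 :=
  fun n => (E (f n)).1

/-- The gates of the environment selected by `f`. -/
def envW {m : ℕ} (E : Fin m → (T1 → T1) × Set T1) (f : ℤ → Fin m) : ℤ → Set T1 :=
  fun n => (E (f n)).2

/-- Total variation of a function on the circle. -/
def eVar (f : T1 → ℝ) : ℝ≥0∞ := eVariationOn (fun x : ℝ => f (x : T1)) (Set.Icc 0 1)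

/-- The BV norm `|f|_v = V(f) + ‖f‖₁` of a function on the circle. -/
def bvNormF (f : T1 → ℝ) : ℝ≥0∞ := eVar f + ENNReal.ofReal (∫ x : T1, |f x|)

abbrev L1T := Lp ℝ 1 (volume : Measure T1)
abbrev OpL1 := L1T →ₗ[ℝ] L1T

/-- `P` is an `L¹` contraction. -/
def IsContractionL1 (P : OpL1) : Prop := ∀ f, ‖P f‖ ≤ ‖f‖

/-- The (essential) variation of an `L¹` class. -/
def essVar (f : L1T) : ℝ≥0∞ := ⨅ (g : T1 → ℝ) (_ : ⇑f =ᵐ[volume] g), eVar g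

/-- The BV norm `|f|_v = V(f) + ‖f‖₁` of an `L¹` class. -/
def bvNorm (f : L1T) : ℝ≥0∞ := essVar f + ENNReal.ofReal ‖f‖

/-- `f ∈ 𝒱₀`: bounded variation and zero mean. -/
def memV0 (f : L1T) : Prop := essVar f ≠ ⊤ ∧ (∫ x : T1, f x) = 0

/-- `opProd P m l = P_{m+l} ∘ ⋯ ∘ P_{m+1}`. -/
def opProd (P : ℕ → OpL1) (m : ℕ) : ℕ → OpL1
  | 0 => LinearMap.id
  | l + 1 => (P (m + l + 1)).comp (opProd P m l)

/-- The metric `d₁(R,P) = sup{‖Rf − Pf‖₁ : |f|_v ≤ 1}`. -/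
def d1 (R P : OpL1) : ℝ := ⨆ f : {f : L1T // bvNorm f ≤ 1}, ‖R f.1 - P f.1‖

/-- `g` is a version of the transfer operator of `T` applied to `f`:
`∫ g·φ = ∫ f·(φ∘T)` for all bounded measurable `φ`. -/
def IsTransferOf (T : T1 → T1) (f g : T1 → ℝ) : Prop :=
  ∀ φ : T1 → ℝ, Measurable φ → (∃ M, ∀ x, |φ x| ≤ M) →
    (∫ x : T1, g x * φ x) = ∫ x : T1, f x * φ (T x)

/-- `h` is a version of `P_S 𝟙` (the density of the pushforward of Lebesgue under `S`). -/
def IsPushDensity (S : T1 → T1) (h : T1 → ℝ) : Prop :=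
  ∀ φ : T1 → ℝ, Measurable φ → (∃ M, ∀ x, |φ x| ≤ M) →
    (∫ x : T1, h x * φ x) = ∫ x : T1, φ (S x)

/-- `compSeq T n = T_n ∘ ⋯ ∘ T_1`. -/
def compSeq {α : Type*} (T : ℕ → α → α) : ℕ → α → α
  | 0 => id
  | n + 1 => T (n + 1) ∘ compSeq T n

/-- `T` is piecewise `C^{1+Lip}` with `γ ≤ |T′| ≤ K`, `Lip(T′) ≤ K₁` on each
piece, continuous except possibly at the endpoints of the arc from `a` of length `l`. -/
def PiecewiseExpandingArc (T : T1 → T1) (a l γ K K₁ : ℝ) : Prop :=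
  ∃ F₁ F₂ : ℝ → ℝ, Differentiable ℝ F₁ ∧ Differentiable ℝ F₂ ∧
    (∀ x, γ ≤ |deriv F₁ x| ∧ |deriv F₁ x| ≤ K) ∧
    (∀ x, γ ≤ |deriv F₂ x| ∧ |deriv F₂ x| ≤ K) ∧
    LipschitzWith (Real.toNNReal K₁) (deriv F₁) ∧
    LipschitzWith (Real.toNNReal K₁) (deriv F₂) ∧
    (∀ x ∈ Set.Ioo a (a + l), T (x : T1) = ((F₁ x : ℝ) : T1)) ∧
    (∀ x ∈ Set.Ioo (a + l) (a + 1), T (x : T1) = ((F₂ x : ℝ) : T1))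

/-- `T` is piecewise differentiable with `|T′| ≥ γ` on each piece, continuous
except possibly at the endpoints of the arc from `a` of length `l`. -/
def PiecewiseExpandingArcLB (T : T1 → T1) (a l γ : ℝ) : Prop :=
  ∃ F₁ F₂ : ℝ → ℝ, Differentiable ℝ F₁ ∧ Differentiable ℝ F₂ ∧
    (∀ x, γ ≤ |deriv F₁ x|) ∧ (∀ x, γ ≤ |deriv F₂ x|) ∧
    (∀ x ∈ Set.Ioo a (a + l), T (x : T1) = ((F₁ x : ℝ) : T1)) ∧
    (∀ x ∈ Set.Ioo (a + l) (a + 1), T (x : T1) = ((F₂ x : ℝ) : T1))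

/-- `T` is piecewise `C^{1+Lip}` with `|T′| ≥ γ` on each piece, continuous
except possibly at the endpoints of the arc from `a` of length `l`. -/
def PiecewiseC1LipArcLB (T : T1 → T1) (a l γ : ℝ) : Prop :=
  ∃ (F₁ F₂ : ℝ → ℝ) (K₁ : NNReal), Differentiable ℝ F₁ ∧ Differentiable ℝ F₂ ∧
    (∀ x, γ ≤ |deriv F₁ x|) ∧ (∀ x, γ ≤ |deriv F₂ x|) ∧
    LipschitzWith K₁ (deriv F₁) ∧ LipschitzWith K₁ (deriv F₂) ∧
    (∀ x ∈ Set.Ioo a (a + l), T (x : T1) = ((F₁ x : ℝ) : T1)) ∧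
    (∀ x ∈ Set.Ioo (a + l) (a + 1), T (x : T1) = ((F₂ x : ℝ) : T1))

/-- A piecewise expanding map with countably many branch cut points: away from
a countable set each point has a local `C^{1+Lip}` lift with `|F′| ≥ γ`. -/
def PiecewiseExpandingCountable (G : T1 → T1) (γ : ℝ) (K₁ : NNReal) : Prop :=
  ∃ s : Set ℝ, s.Countable ∧ ∀ x : ℝ, x ∉ s → ∃ F : ℝ → ℝ,
    Differentiable ℝ F ∧ LipschitzWith K₁ (deriv F) ∧ (∀ y, γ ≤ |deriv F y|) ∧
    ∀ᶠ y in nhds x, G ((y : ℝ) : T1) = ((F y : ℝ) : T1)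

/-- The return time `τ̄` of Model B: `3` on `W̄` and `1` off `W̄`. -/
def tauBar (W : Set T1) (x : T1) : ℝ := if x ∈ W then 3 else 1

/-- The distortion constant `K₀ = ∏_{n=0}^∞ (1 + (K₁/γ) γ^{-n})`. -/
def K0 (γ K₁ : ℝ) : ℝ := ∏' n : ℕ, (1 + (K₁ / γ) * (1 / γ) ^ n)

end DRW

/-! Once `D θ^q ≤ ε/2`, mixing makes `P_q ⋯ P_1` shrink `𝒱₀` by `ε/2` in `L¹`. The difference
`R_q ⋯ R_1 - P_q ⋯ P_1` telescopes into `∑_k R_q ⋯ R_{k+1} (R_k - P_k) P_{k-1} ⋯ P_1`: the `R_j` are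
`L¹` contractions, `d₁` bounds `R_k - P_k` relative to the BV norm, and the Lasota–Yorke inequality
gives `|P_{k-1} ⋯ P_1 f|_v ≤ (ρ + C)^{k-1} |f|_v`, so `δ` of order `ε / ∑_{k<q} (ρ + C)^k` makes
the sum at most `ε/2 |f|_v`. -/

namespace DRW

lemma eVar_const_mul {c : ℝ} (hc : 0 ≤ c) (w : T1 → ℝ) :
    eVar (fun x => c * w x) = ENNReal.ofReal c * eVar w := by
  unfold eVar eVariationOn
  rw [ENNReal.mul_iSup]
  refine iSup_congr fun p => ?_
  rw [Finset.mul_sum]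
  refine Finset.sum_congr rfl fun i _ => ?_
  rw [edist_dist, edist_dist, Real.dist_eq, Real.dist_eq, ← mul_sub, abs_mul,
    abs_of_nonneg hc, ENNReal.ofReal_mul hc]

lemma essVar_smul_le {c : ℝ} (hc : 0 < c) (f : L1T) :
    essVar (c • f) ≤ ENNReal.ofReal c * essVar f := by
  rw [essVar, essVar, ENNReal.mul_iInf_of_ne (by simpa using hc) ENNReal.ofReal_ne_top]
  refine le_iInf fun g => ?_
  rw [ENNReal.mul_iInf_of_ne (by simpa using hc) ENNReal.ofReal_ne_top]
  refine le_iInf fun hfg => ?_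
  have hcfg : ⇑(c • f) =ᵐ[volume] fun x => c * g x := by
    filter_upwards [Lp.coeFn_smul c f, hfg] with x hx hfx
    rw [hx, Pi.smul_apply, smul_eq_mul, hfx]
  exact (iInf₂_le _ hcfg).trans (eVar_const_mul hc.le g).le

lemma bvNorm_smul_le {c : ℝ} (hc : 0 < c) (f : L1T) :
    bvNorm (c • f) ≤ ENNReal.ofReal c * bvNorm f := by
  rw [bvNorm, bvNorm, mul_add, norm_smul, Real.norm_of_nonneg hc.le, ENNReal.ofReal_mul hc.le]
  gcongr
  exact essVar_smul_le hc f

lemma ofReal_norm_le_bvNorm (f : L1T) : ENNReal.ofReal ‖f‖ ≤ bvNorm f :=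
  le_add_self

lemma bvNorm_ne_top_of_memV0 {f : L1T} (hf : memV0 f) : bvNorm f ≠ ⊤ :=
  ENNReal.add_ne_top.mpr ⟨hf.1, ENNReal.ofReal_ne_top⟩

lemma bvNorm_le_of_lasotaYorke {P : OpL1} {ρ C : ℝ}
    (hLY : ∀ f : L1T,
      bvNorm (P f) ≤ ENNReal.ofReal ρ * bvNorm f + ENNReal.ofReal C * ENNReal.ofReal ‖f‖)
    (f : L1T) : bvNorm (P f) ≤ (ENNReal.ofReal ρ + ENNReal.ofReal C) * bvNorm f := by
  rw [add_mul]
  exact (hLY f).trans (by gcongr; exact ofReal_norm_le_bvNorm f)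

section d1

variable {R P : OpL1}

lemma d1_bddAbove (hR : IsContractionL1 R) (hP : IsContractionL1 P) :
    BddAbove (Set.range fun f : {f : L1T // bvNorm f ≤ 1} => ‖R f.1 - P f.1‖) := by
  refine ⟨2, ?_⟩
  rintro x ⟨⟨f, hf⟩, rfl⟩
  have hf1 : ‖f‖ ≤ 1 := ENNReal.ofReal_le_one.mp ((ofReal_norm_le_bvNorm f).trans hf)
  calc ‖R f - P f‖ ≤ ‖R f‖ + ‖P f‖ := norm_sub_le _ _
    _ ≤ 2 := by linarith [hR f, hP f]

lemma norm_sub_le_d1_mul (hR : IsContractionL1 R) (hP : IsContractionL1 P)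
    {g : L1T} (hg : bvNorm g ≠ ⊤) : ‖R g - P g‖ ≤ d1 R P * (bvNorm g).toReal := by
  rcases (ENNReal.toReal_nonneg : 0 ≤ (bvNorm g).toReal).eq_or_lt with hb | hb
  · have hg0 : g = 0 := by
      have hzero : bvNorm g = 0 := ((ENNReal.toReal_eq_zero_iff _).mp hb.symm).resolve_right hg
      simpa [hzero] using ofReal_norm_le_bvNorm g
    rw [← hb, mul_zero, hg0, map_zero, map_zero, sub_zero, norm_zero]
  set b := (bvNorm g).toReal
  have hunit : bvNorm (b⁻¹ • g) ≤ 1 := by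
    calc bvNorm (b⁻¹ • g) ≤ ENNReal.ofReal b⁻¹ * bvNorm g := bvNorm_smul_le (inv_pos.mpr hb) g
      _ = 1 := by
        rw [← ENNReal.ofReal_toReal hg, ← ENNReal.ofReal_mul (inv_pos.mpr hb).le,
          inv_mul_cancel₀ hb.ne', ENNReal.ofReal_one]
  have hle : ‖R (b⁻¹ • g) - P (b⁻¹ • g)‖ ≤ d1 R P :=
    le_ciSup (d1_bddAbove hR hP) (⟨b⁻¹ • g, hunit⟩ : {f : L1T // bvNorm f ≤ 1})
  calc ‖R g - P g‖ = b * ‖R (b⁻¹ • g) - P (b⁻¹ • g)‖ := by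
        rw [map_smul, map_smul, ← smul_sub, norm_smul, Real.norm_of_nonneg (inv_pos.mpr hb).le,
          mul_inv_cancel_left₀ hb.ne']
    _ ≤ d1 R P * b := by rw [mul_comm]; gcongr

lemma ofReal_norm_sub_le_d1_mul (hR : IsContractionL1 R) (hP : IsContractionL1 P)
    {g : L1T} (hg : bvNorm g ≠ ⊤) :
    ENNReal.ofReal ‖R g - P g‖ ≤ ENNReal.ofReal (d1 R P) * bvNorm g := by
  calc ENNReal.ofReal ‖R g - P g‖ ≤ ENNReal.ofReal (d1 R P * (bvNorm g).toReal) :=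
        ENNReal.ofReal_le_ofReal (norm_sub_le_d1_mul hR hP hg)
    _ = ENNReal.ofReal (d1 R P) * bvNorm g := by
        rw [ENNReal.ofReal_mul' ENNReal.toReal_nonneg, ENNReal.ofReal_toReal hg]

end d1

section opProd

variable (R P : ℕ → OpL1) (m : ℕ)

lemma bvNorm_opProd_le {s : ℝ≥0∞} (hP : ∀ k f, bvNorm (P k f) ≤ s * bvNorm f) (n : ℕ)
    (f : L1T) : bvNorm (opProd P m n f) ≤ s ^ n * bvNorm f := by
  induction n with
  | zero => simp [opProd]
  | succ n ih =>
    calc bvNorm (opProd P m (n + 1) f) ≤ s * bvNorm (opProd P m n f) := hP _ _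
      _ ≤ s ^ (n + 1) * bvNorm f := by rw [pow_succ', mul_assoc]; gcongr

lemma norm_opProd_sub_opProd_le (n : ℕ) (hR : ∀ k < n, IsContractionL1 (R (m + k + 1)))
    (f : L1T) :
    ‖opProd R m n f - opProd P m n f‖ ≤
      ∑ k ∈ Finset.range n, ‖R (m + k + 1) (opProd P m k f) - P (m + k + 1) (opProd P m k f)‖ := by
  induction n with
  | zero => simp [opProd]
  | succ n ih =>
    have hsplit : opProd R m (n + 1) f - opProd P m (n + 1) f =
        R (m + n + 1) (opProd R m n f - opProd P m n f) +
          (R (m + n + 1) (opProd P m n f) - P (m + n + 1) (opProd P m n f)) := by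
      simp only [opProd, LinearMap.comp_apply, map_sub]
      abel
    rw [hsplit, Finset.sum_range_succ]
    refine (norm_add_le _ _).trans (add_le_add_left ?_ _)
    exact (hR n n.lt_succ_self _).trans (ih fun k hk => hR k (hk.trans n.lt_succ_self))

lemma ofReal_norm_opProd_sub_opProd_le {s : ℝ≥0∞} (hs : s ≠ ⊤)
    (hLY : ∀ k f, bvNorm (P k f) ≤ s * bvNorm f) (hPc : ∀ k, IsContractionL1 (P k))
    (n : ℕ) (hRc : ∀ k < n, IsContractionL1 (R (m + k + 1)))
    {δ : ℝ} (hd : ∀ k < n, d1 (R (m + k + 1)) (P (m + k + 1)) ≤ δ)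
    {f : L1T} (hf : bvNorm f ≠ ⊤) :
    ENNReal.ofReal ‖opProd R m n f - opProd P m n f‖ ≤
      ENNReal.ofReal δ * (∑ k ∈ Finset.range n, s ^ k) * bvNorm f := by
  have hgrowth k := bvNorm_opProd_le P m hLY k f
  calc ENNReal.ofReal ‖opProd R m n f - opProd P m n f‖
      ≤ ∑ k ∈ Finset.range n,
          ENNReal.ofReal ‖R (m + k + 1) (opProd P m k f) - P (m + k + 1) (opProd P m k f)‖ := by
        rw [← ENNReal.ofReal_sum_of_nonneg fun _ _ => norm_nonneg _]
        exact ENNReal.ofReal_le_ofReal (norm_opProd_sub_opProd_le R P m n hRc f)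
    _ ≤ ∑ k ∈ Finset.range n, ENNReal.ofReal δ * (s ^ k * bvNorm f) := by
        refine Finset.sum_le_sum fun k hk => ?_
        have hk := Finset.mem_range.mp hk
        have hfin : bvNorm (opProd P m k f) ≠ ⊤ :=
          ne_top_of_le_ne_top (ENNReal.mul_ne_top (ENNReal.pow_ne_top hs) hf) (hgrowth k)
        calc _ ≤ ENNReal.ofReal (d1 (R (m + k + 1)) (P (m + k + 1))) * bvNorm (opProd P m k f) :=
              ofReal_norm_sub_le_d1_mul (hRc k hk) (hPc _) hfin
          _ ≤ ENNReal.ofReal δ * (s ^ k * bvNorm f) := by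
              gcongr
              · exact hd k hk
              · exact hgrowth k
    _ = ENNReal.ofReal δ * (∑ k ∈ Finset.range n, s ^ k) * bvNorm f := by
        rw [mul_assoc, Finset.sum_mul, Finset.mul_sum]

end opProd

lemma exists_one_le_mul_pow_lt {θ : ℝ} (hθ0 : 0 ≤ θ) (hθ1 : θ < 1) (D : ℝ) {η : ℝ}
    (hη : 0 < η) : ∃ q : ℕ, 1 ≤ q ∧ D * θ ^ q < η := by
  have hlim : Tendsto (fun q : ℕ => D * θ ^ q) atTop (nhds 0) := by
    simpa using (tendsto_pow_atTop_nhds_zero_of_lt_one hθ0 hθ1).const_mul D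
  obtain ⟨q, hq, hq1⟩ := ((hlim.eventually (gt_mem_nhds hη)).and (eventually_ge_atTop 1)).exists
  exact ⟨q, hq1, hq⟩

theorem perturbed_contraction_general (calP : Set OpL1) (ρ C : ℝ)
    (hcontr : ∀ P ∈ calP, IsContractionL1 P)
    (hLY : ∀ P ∈ calP, ∀ f : L1T,
      bvNorm (P f) ≤ ENNReal.ofReal ρ * bvNorm f + ENNReal.ofReal C * ENNReal.ofReal ‖f‖)
    (P : ℕ → OpL1) (hP : ∀ n, P n ∈ calP)
    (D θ : ℝ) (hθ0 : 0 < θ) (hθ1 : θ < 1)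
    (hmix : ∀ m l : ℕ, 1 ≤ l → ∀ f : L1T, memV0 f →
      bvNorm (opProd P m l f) ≤ ENNReal.ofReal (D * θ ^ l) * bvNorm f) :
    ∀ ε > (0 : ℝ), ∃ q : ℕ, 1 ≤ q ∧ ∃ δ > (0 : ℝ), ∀ R : ℕ → OpL1,
      (∀ k : ℕ, 1 ≤ k → k ≤ q → R k ∈ calP ∧ d1 (R k) (P k) < δ) →
      ∀ f : L1T, memV0 f →
        ENNReal.ofReal ‖opProd R 0 q f‖ ≤ ENNReal.ofReal ε * bvNorm f := by
  intro ε hε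
  obtain ⟨q, hq1, hmixq⟩ := exists_one_le_mul_pow_lt hθ0.le hθ1 D (half_pos hε)
  set s := ENNReal.ofReal ρ + ENNReal.ofReal C
  have hs : s ≠ ⊤ := ENNReal.add_ne_top.mpr ⟨ENNReal.ofReal_ne_top, ENNReal.ofReal_ne_top⟩
  set S := ∑ k ∈ Finset.range q, s ^ k
  have hS : S ≠ ⊤ := ENNReal.sum_ne_top.mpr fun k _ => ENNReal.pow_ne_top hs
  have hS0 : S ≠ 0 := fun h => by
    simpa using Finset.sum_eq_zero_iff.mp h 0 (Finset.mem_range.mpr hq1)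
  have hSpos : 0 < S.toReal := ENNReal.toReal_pos hS0 hS
  refine ⟨q, hq1, ε / 2 / S.toReal, by positivity, fun R hR f hf => ?_⟩
  have hpert := ofReal_norm_opProd_sub_opProd_le R P 0 hs
    (fun k => bvNorm_le_of_lasotaYorke (hLY _ (hP k))) (fun k => hcontr _ (hP k)) q
    (fun k _ => hcontr _ (hR (0 + k + 1) (by omega) (by omega)).1)
    (fun k _ => (hR (0 + k + 1) (by omega) (by omega)).2.le) (bvNorm_ne_top_of_memV0 hf)
  rw [ENNReal.ofReal_div_of_pos hSpos, ENNReal.ofReal_toReal hS,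
    ENNReal.div_mul_cancel hS0 hS] at hpert
  calc ENNReal.ofReal ‖opProd R 0 q f‖
      ≤ ENNReal.ofReal ‖opProd P 0 q f‖ + ENNReal.ofReal ‖opProd R 0 q f - opProd P 0 q f‖ := by
        rw [← ENNReal.ofReal_add (norm_nonneg _) (norm_nonneg _)]
        exact ENNReal.ofReal_le_ofReal (norm_le_norm_add_norm_sub' _ _)
    _ ≤ ENNReal.ofReal (ε / 2) * bvNorm f + ENNReal.ofReal (ε / 2) * bvNorm f := by
        gcongr
        refine (ofReal_norm_le_bvNorm _).trans ((hmix 0 q hq1 f hf).trans ?_)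
        exact mul_le_mul_left (ENNReal.ofReal_le_ofReal hmixq.le) _
    _ = ENNReal.ofReal ε * bvNorm f := by
        rw [← add_mul, ← ENNReal.ofReal_add (by positivity) (by positivity), add_halves]

/-- Lemma 2.3: stability of mixing under perturbation; for
every `ε > 0` there are `q(ε)` and `δ(ε) > 0` such that any `q` operators
`δ`-close (in `d₁`) to `P_1, …, P_q` contract mean-zero BV functions in `L¹`
by a factor `ε`. -/
theorem perturbed_contraction (calP : Set OpL1) (ρ C : ℝ)
    (hρ0 : 0 < ρ) (hρ1 : ρ < 1) (hC : 0 < C)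
    (hcontr : ∀ P ∈ calP, IsContractionL1 P)
    (hLY : ∀ P ∈ calP, ∀ f : L1T,
      bvNorm (P f) ≤ ENNReal.ofReal ρ * bvNorm f + ENNReal.ofReal C * ENNReal.ofReal ‖f‖)
    (P : ℕ → OpL1) (hP : ∀ n, P n ∈ calP)
    (D θ : ℝ) (hD : 0 < D) (hθ0 : 0 < θ) (hθ1 : θ < 1)
    (hmix : ∀ m l : ℕ, 1 ≤ l → ∀ f : L1T, memV0 f →
      bvNorm (opProd P m l f) ≤ ENNReal.ofReal (D * θ ^ l) * bvNorm f) :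
    ∀ ε > (0 : ℝ), ∃ q : ℕ, 1 ≤ q ∧ ∃ δ > (0 : ℝ), ∀ R : ℕ → OpL1,
      (∀ k : ℕ, 1 ≤ k → k ≤ q → R k ∈ calP ∧ d1 (R k) (P k) < δ) →
      ∀ f : L1T, memV0 f →
        ENNReal.ofReal ‖opProd R 0 q f‖ ≤ ENNReal.ofReal ε * bvNorm f :=
  perturbed_contraction_general calP ρ C hcontr hLY P hP D θ hθ0 hθ1 hmix

end DRW
end
end

section
/- Let {G_n}_{n≥1} be maps of 𝕋 such that each G_n is continuous everywhere except possibly at the two endpoints of an arc W_n, and on each continuity piece G_n is differentiable with |G_n′(x)| ≥ γ for a constant γ > 3. Then for every nondegenerate arc I ⊂ 𝕋 there exists N, with N = O(log(1/|I|)), such that (G_N ∘ G_{N−1} ∘ ⋯ ∘ G_1)(I) = 𝕋. More precisely, there are constants A, B depending only on γ such that one may take N ≤ A + B log(1/|I|). -/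
open MeasureTheory Set Filter
open scoped ENNReal NNReal

attribute [local instance] Classical.propDecidable

noncomputable section

namespace DRW

/-! On the real line the discontinuities of `G_n` form the two cosets `a + ℤ` and `a + l + ℤ`.
An interval of length `L ≤ 1` meets each coset at most once, so it contains a subinterval of
length `L / 3` on which `G_n` lifts to a map with `|F'| ≥ γ`, whose image is an interval of
length at least `γ L / 3`. As `γ / 3 > 1`, the arcs contained in the images of `I` grow
geometrically; after `⌈log (1 / |I|) / log (γ / 3)⌉` steps one of length one is reached, and one
more step produces an arc longer than the circle. -/

open Real

theorem exists_Ioo_subset_third_length_notMem (p q : ℝ) {c d : ℝ} (hcd : c ≤ d) :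
    ∃ u v, Ioo u v ⊆ Ioo c d ∧ (d - c) / 3 ≤ v - u ∧ p ∉ Ioo u v ∧ q ∉ Ioo u v := by
  wlog hpq : p ≤ q generalizing p q
  · obtain ⟨u, v, hsub, hlen, hq, hp⟩ := this q p (le_of_not_ge hpq)
    exact ⟨u, v, hsub, hlen, hp, hq⟩
  set p' := max c (min p d)
  set q' := max p' (min q d)
  have hp' : p' ≤ d := max_le hcd (min_le_right _ _)
  have hq' : q' ≤ d := max_le hp' (min_le_right _ _)
  by_cases h₁ : (d - c) / 3 ≤ p' - c
  · refine ⟨c, p', Ioo_subset_Ioo_right hp', h₁, ?_, ?_⟩ <;>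
      · rintro ⟨h, h'⟩
        simp only [p', lt_max_iff, lt_min_iff] at h'
        grind
  by_cases h₂ : (d - c) / 3 ≤ q' - p'
  · refine ⟨p', q', Ioo_subset_Ioo (le_max_left _ _) hq', h₂, ?_, ?_⟩ <;>
      · rintro ⟨h, h'⟩
        simp only [q', p', lt_max_iff, max_lt_iff, lt_min_iff, min_lt_iff] at h h'
        grind
  refine ⟨q', d, Ioo_subset_Ioo_left ((le_max_left _ _).trans (le_max_left _ _)),
    by linarith, ?_, ?_⟩ <;>
    · rintro ⟨h, h'⟩
      simp only [q', p', max_lt_iff, min_lt_iff] at h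
      grind

theorem eq_ceil_of_mem_Ioo_add_int {b c : ℝ} {k : ℤ} (hc : c < b + k) (hc' : b + k < c + 1) :
    k = ⌈c - b⌉ := by
  rw [eq_comm, Int.ceil_eq_iff]
  constructor <;> linarith

theorem exists_int_branch_of_forall_ne {a l u v : ℝ}
    (havoid : ∀ x ∈ Ioo u v, ∀ k : ℤ, x ≠ a + k ∧ x ≠ a + l + k) :
    ∃ k : ℤ, (∀ x ∈ Ioo u v, x - k ∈ Ioo a (a + l)) ∨
      (∀ x ∈ Ioo u v, x - k ∈ Ioo (a + l) (a + 1)) := by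
  set k := ⌊u - a⌋
  have hku : a + k ≤ u := by linarith [Int.floor_le (u - a)]
  have hvk : v ≤ a + k + 1 := by
    by_contra! h
    have hu : u < a + k + 1 := by linarith [Int.lt_floor_add_one (u - a)]
    exact (havoid _ ⟨hu, h⟩ (k + 1)).1 (by push_cast; ring)
  refine ⟨k, ?_⟩
  rcases le_or_gt v (a + l + k) with hv | hv
  · exact Or.inl fun x hx => ⟨by linarith [hx.1], by linarith [hx.2]⟩
  · have hu : a + l + k ≤ u := by
      by_contra! h
      exact (havoid _ ⟨h, hv⟩ k).2 rfl
    exact Or.inr fun x hx => ⟨by linarith [hx.1], by linarith [hx.2]⟩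

theorem exists_Ioo_subset_image_of_le_abs_deriv {γ : ℝ} (hγ : 0 < γ) {H : ℝ → ℝ}
    (hd : Differentiable ℝ H) (hlb : ∀ x, γ ≤ |deriv H x|) {u v : ℝ} (huv : u ≤ v) :
    ∃ s t : ℝ, γ * (v - u) ≤ t - s ∧ Ioo s t ⊆ H '' Ioo u v := by
  have hcont : ContinuousOn H (Icc u v) := hd.continuous.continuousOn
  -- Darboux: a derivative that never vanishes has constant sign.
  rcases hasDerivWithinAt_forall_lt_or_forall_gt_of_forall_ne convex_univ
      (fun x _ => (hd x).hasDerivAt.hasDerivWithinAt)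
      (fun x _ h => by linarith [hlb x, abs_eq_zero.mpr h]) with hneg | hpos
  · have hle : ∀ x, deriv H x ≤ -γ := fun x => by
      linarith [hlb x, abs_of_neg (hneg x (mem_univ x))]
    exact ⟨H v, H u, by linarith [image_sub_le_mul_sub_of_deriv_le hd hle huv],
      intermediate_value_Ioo' huv hcont⟩
  · have hge : ∀ x, γ ≤ deriv H x := fun x => by
      linarith [hlb x, abs_of_pos (hpos x (mem_univ x))]
    exact ⟨H u, H v, by linarith [mul_sub_le_image_sub_of_le_deriv hd hge huv],
      intermediate_value_Ioo huv hcont⟩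

theorem coe_sub_intCast (x : ℝ) (k : ℤ) : ((x - k : ℝ) : T1) = x := by
  simp

theorem PiecewiseExpandingArcLB.exists_lift_on_Ioo {T : T1 → T1} {a l γ u v : ℝ}
    (hT : PiecewiseExpandingArcLB T a l γ)
    (havoid : ∀ x ∈ Ioo u v, ∀ k : ℤ, x ≠ a + k ∧ x ≠ a + l + k) :
    ∃ H : ℝ → ℝ, Differentiable ℝ H ∧ (∀ x, γ ≤ |deriv H x|) ∧
      ∀ x ∈ Ioo u v, T x = H x := by
  obtain ⟨F₁, F₂, hF₁, hF₂, hF₁', hF₂', hT₁, hT₂⟩ := hT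
  obtain ⟨k, hbranch⟩ := exists_int_branch_of_forall_ne havoid
  have shift : ∀ F : ℝ → ℝ, Differentiable ℝ F → (∀ x, γ ≤ |deriv F x|) →
      Differentiable ℝ (fun x => F (x - k)) ∧ ∀ x, γ ≤ |deriv (fun x => F (x - k)) x| :=
    fun F hF hF' => ⟨hF.comp (differentiable_id.sub_const _),
      fun x => by simpa only [deriv_comp_sub_const] using hF' (x - k)⟩
  rcases hbranch with hb | hb
  · exact ⟨_, (shift F₁ hF₁ hF₁').1, (shift F₁ hF₁ hF₁').2,
      fun x hx => by rw [← coe_sub_intCast x k, hT₁ _ (hb x hx)]⟩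
  · exact ⟨_, (shift F₂ hF₂ hF₂').1, (shift F₂ hF₂ hF₂').2,
      fun x hx => by rw [← coe_sub_intCast x k, hT₂ _ (hb x hx)]⟩

def HasArcOfLength (S : Set T1) (L : ℝ) : Prop :=
  ∃ c : ℝ, ((↑) : ℝ → T1) '' Ioo c (c + L) ⊆ S

theorem IsArc.hasArcOfLength {I : Set T1} {a l : ℝ} (hI : IsArc I a l) : HasArcOfLength I l :=
  ⟨a, hI.2.2 ▸ image_mono Ioo_subset_Ico_self⟩

theorem HasArcOfLength.mono {S : Set T1} {L L' : ℝ} (hS : HasArcOfLength S L) (hL : L' ≤ L) :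
    HasArcOfLength S L' :=
  let ⟨c, hc⟩ := hS
  ⟨c, (image_mono (Ioo_subset_Ioo_right (by linarith))).trans hc⟩

theorem HasArcOfLength.eq_univ {S : Set T1} {L : ℝ} (hS : HasArcOfLength S L) (hL : 1 < L) :
    S = univ := by
  obtain ⟨c, hc⟩ := hS
  refine eq_univ_of_univ_subset (subset_trans ?_ hc)
  rw [← AddCircle.coe_image_Ico_eq (1 : ℝ) (c + (L - 1) / 2)]
  exact image_mono fun x hx => ⟨by linarith [hx.1], by linarith [hx.2]⟩

theorem HasArcOfLength.image_of_piecewiseExpandingArcLB {S : Set T1} {L : ℝ}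
    (hS : HasArcOfLength S L) (hL₀ : 0 ≤ L) (hL₁ : L ≤ 1) {T : T1 → T1} {a l γ : ℝ}
    (hγ : 0 < γ) (hT : PiecewiseExpandingArcLB T a l γ) :
    HasArcOfLength (T '' S) (γ / 3 * L) := by
  obtain ⟨c, hc⟩ := hS
  -- An interval of length at most one meets each coset `b + ℤ` at most at `b + ⌈c - b⌉`.
  obtain ⟨u, v, huv, hlen, h₁, h₂⟩ := exists_Ioo_subset_third_length_notMem
    (a + ⌈c - a⌉) (a + l + ⌈c - (a + l)⌉) (le_add_of_nonneg_right hL₀ : c ≤ c + L)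
  have havoid : ∀ x ∈ Ioo u v, ∀ k : ℤ, x ≠ a + k ∧ x ≠ a + l + k := by
    intro x hx k
    obtain ⟨hcx, hxc⟩ := huv hx
    constructor <;> rintro rfl
    · rw [eq_ceil_of_mem_Ioo_add_int hcx (by linarith)] at hx
      exact h₁ hx
    · rw [eq_ceil_of_mem_Ioo_add_int hcx (by linarith)] at hx
      exact h₂ hx
  obtain ⟨H, hH, hH', hTH⟩ := hT.exists_lift_on_Ioo havoid
  obtain ⟨s, t, hst, hsub⟩ :=
    exists_Ioo_subset_image_of_le_abs_deriv hγ hH hH' (by linarith : u ≤ v)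
  have hlen' : γ / 3 * L ≤ t - s := by nlinarith
  refine ⟨s, ?_⟩
  rintro _ ⟨y, hy, rfl⟩
  obtain ⟨x, hx, rfl⟩ := hsub ⟨hy.1, by linarith [hy.2]⟩
  exact ⟨x, hc (mem_image_of_mem _ (huv hx)), hTH x hx⟩

theorem hasArcOfLength_compSeq {G : ℕ → T1 → T1} {a l : ℕ → ℝ} {γ : ℝ} (hγ : 3 ≤ γ)
    (hG : ∀ n, PiecewiseExpandingArcLB (G n) (a n) (l n) γ) {S : Set T1} {L : ℝ}
    (hS : HasArcOfLength S L) (hL : 0 ≤ L) (n : ℕ) :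
    HasArcOfLength (compSeq G n '' S) (min ((γ / 3) ^ n * L) 1) := by
  induction n with
  | zero => simpa [compSeq] using hS.mono (min_le_left _ _)
  | succ n ih =>
    rw [compSeq, image_comp]
    refine (ih.image_of_piecewiseExpandingArcLB (le_min (by positivity) zero_le_one)
      (min_le_right _ _) (by linarith) (hG (n + 1))).mono ?_
    calc min ((γ / 3) ^ (n + 1) * L) 1 ≤ min (γ / 3 * ((γ / 3) ^ n * L)) (γ / 3 * 1) :=
          min_le_min (le_of_eq (by ring)) (by linarith)
      _ = γ / 3 * min ((γ / 3) ^ n * L) 1 := (mul_min_of_nonneg _ _ (by positivity)).symm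

/-- covering property: an arc `I` covers the whole circle
after `N = O(log(1/|I|))` iterations of the expanding maps `G_n`. -/
theorem arc_covers_circle (γ : ℝ) (h3 : 3 < γ) :
    ∃ A B : ℝ, ∀ (G : ℕ → T1 → T1) (W : ℕ → Set T1) (a l : ℕ → ℝ),
      (∀ n, IsArc (W n) (a n) (l n)) →
      (∀ n, PiecewiseExpandingArcLB (G n) (a n) (l n) γ) →
      ∀ (I : Set T1) (aI lI : ℝ), IsArc I aI lI →
      ∃ N : ℕ, (N : ℝ) ≤ A + B * Real.log (1 / lI) ∧
        compSeq G N '' I = Set.univ := by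
  have hlog : 0 < log (γ / 3) := log_pos (by linarith)
  refine ⟨2, 1 / log (γ / 3), fun G W a l _ hG I aI lI hI => ?_⟩
  obtain ⟨hlI₀, hlI₁, -⟩ := id hI
  set n := ⌈log (1 / lI) / log (γ / 3)⌉₊
  have hn : (n : ℝ) < log (1 / lI) / log (γ / 3) + 1 :=
    Nat.ceil_lt_add_one (div_nonneg (log_nonneg (one_le_one_div hlI₀ hlI₁)) hlog.le)
  have hgrow : 1 ≤ (γ / 3) ^ n * lI := by
    have := le_pow_of_log_le (by linarith : (0 : ℝ) < γ / 3)
      ((div_le_iff₀ hlog).mp (Nat.le_ceil (log (1 / lI) / log (γ / 3))))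
    rwa [div_le_iff₀ hlI₀] at this
  have harc := hasArcOfLength_compSeq h3.le hG hI.hasArcOfLength hlI₀.le n
  rw [min_eq_right hgrow] at harc
  refine ⟨n + 1, by push_cast; rw [one_div_mul_eq_div]; linarith, ?_⟩
  rw [compSeq, image_comp]
  exact (harc.image_of_piecewiseExpandingArcLB zero_le_one le_rfl (by linarith)
    (hG (n + 1))).eq_univ (by linarith)

end DRW
end
end

section
/- Let {T_n}_{n≥1} be C^{1+Lip} maps of 𝕋 with 3 < γ ≤ |T_n′(x)| ≤ K for all x and Lip(T_n′) ≤ K₁. Write T_{1,n} = T_n ∘ ⋯ ∘ T_1 and let 𝒜_n = (T_{1,n})^{−1}(ℬ) be the pullback of the Borel σ-algebra ℬ of 𝕋, and 𝒜_∞ = ∩_{n≥1} 𝒜_n the tail σ-algebra. Then 𝒜_∞ is trivial for Lebesgue measure: every A ∈ 𝒜_∞ has Lebesgue measure 0 or 1. -/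
open MeasureTheory Set Filter
open scoped ENNReal NNReal

attribute [local instance] Classical.propDecidable

noncomputable section

/-!
A tail set `A` is, for every `n`, a pullback `(T_{1,n})⁻¹ B_n`. A lift `Φ_n` of `T_{1,n}` expands
by `γ ^ n`, and its distortion is bounded uniformly in `n`: `log |T_k'|` is Lipschitz and
backward orbits contract geometrically. Around any point `x₀`, `Φ_n` maps an interval `J` of
length `O(γ ^ (-n))` bijectively onto a fundamental domain of the circle, with `|Φ_n'|` comparable
on `J` to `|Φ_n' x₀|`, so `volume (B_n)ᶜ ≤ C · volume (J \ A) / |J|`. At a Lebesgue density point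
of `A` the right-hand side tends to `0`. If `A` and `Aᶜ` both had positive measure, both
`volume (B_n)ᶜ` and `volume B_n` would tend to `0`, although their sum is `1`.
-/

open Metric Topology

theorem mul_abs_sub_le_abs_sub_of_le_abs_deriv {f : ℝ → ℝ} (hf : Differentiable ℝ f)
    {g a b : ℝ} (h : ∀ x ∈ uIcc a b, g ≤ |deriv f x|) : g * |b - a| ≤ |f b - f a| := by
  wlog hab : a < b generalizing a b
  · rcases (not_lt.1 hab).eq_or_lt with rfl | hba
    · simp
    · simpa only [abs_sub_comm] using this (by rwa [uIcc_comm]) hba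
  obtain ⟨c, hc, hslope⟩ :=
    exists_deriv_eq_slope f hab hf.continuous.continuousOn hf.differentiableOn
  have hba : 0 < |b - a| := abs_pos.2 (sub_pos.2 hab).ne'
  calc g * |b - a| ≤ |deriv f c| * |b - a| := by
        gcongr
        exact h c (Icc_subset_uIcc (Ioo_subset_Icc_self hc))
    _ = |f b - f a| := by rw [hslope, abs_div, div_mul_cancel₀ _ hba.ne']

theorem injective_of_mul_abs_sub_le {f : ℝ → ℝ} {g : ℝ} (hg : 0 < g)
    (h : ∀ a b, g * |b - a| ≤ |f b - f a|) : Function.Injective f := fun a b hab => by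
  have h' := h a b
  rw [hab, sub_self, abs_zero] at h'
  have : |b - a| ≤ 0 := nonpos_of_mul_nonpos_right h' hg
  linarith [abs_nonpos_iff.1 this]

theorem surjective_of_mul_abs_sub_le {f : ℝ → ℝ} (hf : Continuous f) {g : ℝ} (hg : 0 < g)
    (h : ∀ a b, g * |b - a| ≤ |f b - f a|) : Function.Surjective f := by
  wlog hmono : StrictMono f generalizing f
  · have hanti : StrictAnti f :=
      (hf.strictMono_of_inj (injective_of_mul_abs_sub_le hg h)).resolve_left hmono
    refine Function.Surjective.of_comp (g := Neg.neg) (this (hf.comp continuous_neg) ?_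
      (hanti.comp fun _ _ => neg_lt_neg))
    intro a b
    simpa only [Function.comp_apply, neg_sub_neg, abs_sub_comm] using h (-a) (-b)
  refine hf.surjective ?_ ?_
  · refine tendsto_atTop_mono' _ ?_
      (tendsto_atTop_add_const_left _ (f 0) (tendsto_id.const_mul_atTop hg))
    filter_upwards [eventually_ge_atTop 0] with x hx
    have h' := h 0 x
    rw [sub_zero, abs_of_nonneg hx, abs_of_nonneg (sub_nonneg.2 (hmono.monotone hx))] at h'
    simp only [id]
    linarith
  · refine tendsto_atBot_mono' _ ?_
      (tendsto_atBot_add_const_left _ (f 0) (tendsto_id.const_mul_atBot hg))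
    filter_upwards [eventually_le_atBot 0] with x hx
    have h' := h x 0
    rw [zero_sub, abs_neg, abs_of_nonpos hx,
      abs_of_nonneg (sub_nonneg.2 (hmono.monotone hx))] at h'
    simp only [id]
    linarith

theorem abs_le_exp_mul_abs_of_lipschitzWith {u : ℝ → ℝ} {L : ℝ≥0} (hu : LipschitzWith L u)
    {γ : ℝ} (hγ : 0 < γ) {a b : ℝ} (hb : γ ≤ |u b|) :
    |u a| ≤ Real.exp (L / γ * |a - b|) * |u b| := by
  have hlip : |u a - u b| ≤ L * |a - b| := by
    simpa only [Real.dist_eq] using hu.dist_le_mul a b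
  have hrel : L * |a - b| ≤ L / γ * |a - b| * |u b| :=
    calc L * |a - b| = L / γ * |a - b| * γ := by field_simp
      _ ≤ L / γ * |a - b| * |u b| := by gcongr
  calc |u a| ≤ (1 + L / γ * |a - b|) * |u b| := by
        linarith [abs_sub_abs_le_abs_sub (u a) (u b)]
    _ ≤ Real.exp (L / γ * |a - b|) * |u b| := by
        gcongr
        linarith [Real.add_one_le_exp (L / γ * |a - b|)]

def HasBoundedDistortion (Φ : ℝ → ℝ) (c : ℝ) : Prop :=
  ∀ x y, |deriv Φ x| ≤ Real.exp (c * |Φ x - Φ y|) * |deriv Φ y|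

theorem HasBoundedDistortion.comp {Φ F : ℝ → ℝ} {c γ : ℝ} {L : ℝ≥0}
    (hΦ : HasBoundedDistortion Φ c) (hΦd : Differentiable ℝ Φ) (hF : Differentiable ℝ F)
    (hγ : 0 < γ) (hFγ : ∀ x, γ ≤ |deriv F x|) (hFL : LipschitzWith L (deriv F))
    (hc : 0 ≤ c) (hcL : L / γ + c ≤ c * γ) : HasBoundedDistortion (F ∘ Φ) c := by
  intro x y
  have hderiv (z : ℝ) : |deriv (F ∘ Φ) z| = |deriv F (Φ z)| * |deriv Φ z| := by
    rw [deriv_comp z (hF _) (hΦd _), abs_mul]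
  set d := |Φ x - Φ y|
  have hexpand : γ * d ≤ |F (Φ x) - F (Φ y)| :=
    mul_abs_sub_le_abs_sub_of_le_abs_deriv hF fun z _ => hFγ z
  calc |deriv (F ∘ Φ) x|
      ≤ Real.exp (L / γ * d) * |deriv F (Φ y)| * (Real.exp (c * d) * |deriv Φ y|) := by
        rw [hderiv]
        gcongr
        · exact abs_le_exp_mul_abs_of_lipschitzWith hFL hγ (hFγ _)
        · exact hΦ x y
    _ = Real.exp ((L / γ + c) * d) * |deriv (F ∘ Φ) y| := by
        rw [hderiv, add_mul, Real.exp_add]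
        ring
    _ ≤ Real.exp (c * |(F ∘ Φ) x - (F ∘ Φ) y|) * |deriv (F ∘ Φ) y| := by
        gcongr Real.exp ?_ * _
        calc (L / γ + c) * d ≤ c * γ * d := by gcongr
          _ ≤ c * |F (Φ x) - F (Φ y)| := by rw [mul_assoc]; gcongr

theorem volume_Ioc_diff_le_of_hasBoundedDistortion {Φ : ℝ → ℝ} (hΦ : Differentiable ℝ Φ)
    {g c : ℝ} (hg : 0 < g) (hlb : ∀ x, g ≤ |deriv Φ x|) (hdist : HasBoundedDistortion Φ c)
    (hc : 0 ≤ c) {E : Set ℝ} (hE : MeasurableSet E) (x₀ : ℝ) :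
    ∃ r, 0 < r ∧ r ≤ Real.exp c / g ∧
      volume (Ioc (Φ x₀ - 1) (Φ x₀) \ E) ≤ ENNReal.ofReal (2 * Real.exp c ^ 2) *
        (volume ((Φ ⁻¹' E)ᶜ ∩ closedBall x₀ r) / volume (closedBall x₀ r)) := by
  set D := Real.exp c
  have hD : 0 < D := Real.exp_pos c
  have hnear (x y : ℝ) (h : |Φ x - Φ y| ≤ 1) : |deriv Φ x| ≤ D * |deriv Φ y| :=
    (hdist x y).trans (by gcongr; exact Real.exp_le_exp.2 (mul_le_of_le_one_right hc h))
  have hexpand (a b : ℝ) : g * |b - a| ≤ |Φ b - Φ a| :=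
    mul_abs_sub_le_abs_sub_of_le_abs_deriv hΦ fun x _ => hlb x
  have hinj := injective_of_mul_abs_sub_le hg hexpand
  set J := Φ ⁻¹' Ioc (Φ x₀ - 1) (Φ x₀)
  have hx₀ : x₀ ∈ J := ⟨by simp, le_rfl⟩
  have hJ (x : ℝ) (hx : x ∈ J) : |Φ x - Φ x₀| ≤ 1 := by
    rw [abs_le]
    constructor <;> linarith [hx.1, hx.2]
  -- `J` is an interval, because the injective continuous map `Φ` is monotone or antitone.
  have hJconn (x : ℝ) (hx : x ∈ J) : uIcc x₀ x ⊆ J := by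
    have himage : Φ '' uIcc x₀ x ⊆ uIcc (Φ x₀) (Φ x) :=
      (hΦ.continuous.strictMono_of_inj hinj).elim (fun h => h.monotone.image_uIcc_subset)
        (fun h => h.antitone.image_uIcc_subset)
    exact (image_subset_iff.1 himage).trans (preimage_mono (ordConnected_Ioc.uIcc_subset hx₀ hx))
  have hd₀ : 0 < |deriv Φ x₀| := hg.trans_le (hlb x₀)
  set r := D / |deriv Φ x₀|
  have hball : J ⊆ closedBall x₀ r := fun x hx => by
    have key : |deriv Φ x₀| / D * |x - x₀| ≤ |Φ x - Φ x₀| :=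
      mul_abs_sub_le_abs_sub_of_le_abs_deriv hΦ fun ξ hξ => by
        rw [div_le_iff₀' hD]
        exact hnear _ _ (by rw [abs_sub_comm]; exact hJ ξ (hJconn x hx hξ))
    have key' := key.trans (hJ x hx)
    rw [div_mul_eq_mul_div, div_le_one hD] at key'
    rw [mem_closedBall, Real.dist_eq, le_div_iff₀ hd₀]
    linarith
  have hJE : MeasurableSet (J \ Φ ⁻¹' E) :=
    (measurableSet_Ioc.preimage hΦ.continuous.measurable).diff
      (hE.preimage hΦ.continuous.measurable)
  refine ⟨r, div_pos hD hd₀, div_le_div_of_nonneg_left hD.le hg (hlb x₀), ?_⟩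
  calc volume (Ioc (Φ x₀ - 1) (Φ x₀) \ E)
      ≤ volume (Φ '' (J \ Φ ⁻¹' E)) := measure_mono <| by
        rintro y ⟨hyI, hyE⟩
        obtain ⟨x, rfl⟩ := surjective_of_mul_abs_sub_le hΦ.continuous hg hexpand y
        exact ⟨x, ⟨hyI, hyE⟩, rfl⟩
    _ = ∫⁻ x in J \ Φ ⁻¹' E, ENNReal.ofReal |deriv Φ x| := by
        simpa using lintegral_image_eq_lintegral_abs_deriv_mul hJE
          (fun x _ => (hΦ x).hasDerivAt.hasDerivWithinAt) hinj.injOn 1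
    _ ≤ ∫⁻ _ in J \ Φ ⁻¹' E, ENNReal.ofReal (D * |deriv Φ x₀|) :=
        setLIntegral_mono' hJE fun x hx => ENNReal.ofReal_le_ofReal (hnear x x₀ (hJ x hx.1))
    _ = ENNReal.ofReal (D * |deriv Φ x₀|) * volume (J \ Φ ⁻¹' E) := setLIntegral_const _ _
    _ ≤ ENNReal.ofReal (D * |deriv Φ x₀|) * volume ((Φ ⁻¹' E)ᶜ ∩ closedBall x₀ r) := by
        gcongr
        rintro x ⟨hxJ, hxE⟩
        exact ⟨hxE, hball hxJ⟩
    _ = ENNReal.ofReal (2 * D ^ 2) *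
        (volume ((Φ ⁻¹' E)ᶜ ∩ closedBall x₀ r) / volume (closedBall x₀ r)) := by
        rw [Real.volume_closedBall, ENNReal.div_eq_inv_mul, ← mul_assoc,
          ← ENNReal.ofReal_inv_of_pos (by positivity), ← ENNReal.ofReal_mul (by positivity)]
        congr 2
        simp only [r]
        field_simp

theorem exists_mem_tendsto_measure_compl_inter_div {β : Type*} [MetricSpace β]
    [MeasurableSpace β] [BorelSpace β] [SecondCountableTopology β] [HasBesicovitchCovering β]
    {μ : Measure β} [IsLocallyFiniteMeasure μ] {s : Set β} (hs : MeasurableSet s)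
    (h : μ s ≠ 0) :
    ∃ x ∈ s, Tendsto (fun r => μ (sᶜ ∩ closedBall x r) / μ (closedBall x r)) (𝓝[>] 0) (𝓝 0) := by
  obtain ⟨x, hx, hlim⟩ := Measure.exists_mem_of_measure_ne_zero_of_ae h
    (ae_restrict_of_ae (Besicovitch.ae_tendsto_measure_inter_div_of_measurableSet μ hs.compl))
  exact ⟨x, hx, by simpa [hx] using hlim⟩

namespace DRW

theorem IsLift.comp {T S : T1 → T1} {F Φ : ℝ → ℝ} (hT : IsLift T F) (hS : IsLift S Φ) :
    IsLift (T ∘ S) (F ∘ Φ) := fun x => by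
  rw [Function.comp_apply, hS x, hT (Φ x), Function.comp_apply]

theorem IsLift.continuous {T : T1 → T1} {F : ℝ → ℝ} (hT : IsLift T F) (hF : Continuous F) :
    Continuous T := by
  have h : T ∘ ((↑) : ℝ → T1) = (↑) ∘ F := funext hT
  exact (QuotientAddGroup.isQuotientMap_mk _).continuous_iff.2
    (h ▸ (AddCircle.continuous_mk' 1).comp hF)

theorem continuous_compSeq {α : Type*} [TopologicalSpace α] {T : ℕ → α → α}
    (hT : ∀ n, Continuous (T n)) (n : ℕ) : Continuous (compSeq T n) := by
  induction n with
  | zero => exact continuous_id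
  | succ n ih => exact (hT (n + 1)).comp ih

instance : IsProbabilityMeasure (volume : Measure T1) := ⟨UnitAddCircle.measure_univ⟩

theorem volume_preimage_coe_inter_Ioc {C : Set T1} (hC : MeasurableSet C) (t : ℝ) :
    volume (((↑) : ℝ → T1) ⁻¹' C ∩ Ioc t (t + 1)) = volume C := by
  rw [← Measure.restrict_apply (AddCircle.measurable_mk' hC),
    (UnitAddCircle.measurePreserving_mk t).measure_preimage hC.nullMeasurableSet]

theorem exists_lift_compSeq {γ K K₁ : ℝ} (hγ : 1 < γ) {T : ℕ → T1 → T1}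
    (hT : ∀ n, ExpandingC1Lip (T n) γ K K₁) (n : ℕ) :
    ∃ Φ : ℝ → ℝ, IsLift (compSeq T n) Φ ∧ Differentiable ℝ Φ ∧
      (∀ x, γ ^ n ≤ |deriv Φ x|) ∧
      HasBoundedDistortion Φ (K₁.toNNReal / (γ * (γ - 1))) := by
  have hγ₀ : 0 < γ := by linarith
  have hγ₁ : 0 < γ - 1 := by linarith
  have hc : 0 ≤ (K₁.toNNReal : ℝ) / (γ * (γ - 1)) := by positivity
  -- This `c` solves `K₁ / γ + c = c * γ`, the condition of `HasBoundedDistortion.comp`.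
  induction n with
  | zero =>
    refine ⟨id, fun _ => rfl, differentiable_id, by simp, fun x y => ?_⟩
    simpa using Real.one_le_exp (by positivity)
  | succ n ih =>
    obtain ⟨Φ, hlift, hΦ, hlb, hdist⟩ := ih
    obtain ⟨F, hFlift, hF, hFbd, hFL⟩ := hT (n + 1)
    refine ⟨F ∘ Φ, hFlift.comp hlift, hF.comp hΦ, fun x => ?_,
      hdist.comp hΦ hF hγ₀ (fun x => (hFbd x).1) hFL hc (le_of_eq ?_)⟩
    · rw [deriv_comp x (hF _) (hΦ _), abs_mul, pow_succ']
      exact mul_le_mul (hFbd _).1 (hlb x) (by positivity) (abs_nonneg _)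
    · field_simp
      ring

theorem tendsto_volume_compl_of_compSeq_preimage_eq {γ K K₁ : ℝ} (hγ : 1 < γ)
    {T : ℕ → T1 → T1} (hT : ∀ n, ExpandingC1Lip (T n) γ K K₁) {A : Set T1} (hA : volume A ≠ 0)
    {B : ℕ → Set T1} (hB : ∀ n, MeasurableSet (B n)) (hAB : ∀ n, compSeq T n ⁻¹' B n = A) :
    Tendsto (fun n => volume (B n)ᶜ) atTop (𝓝 0) := by
  set A' : Set ℝ := (↑) ⁻¹' A
  have hAm : MeasurableSet A := hAB 0 ▸ hB 0
  have hA' : volume A' ≠ 0 := fun h => hA <| by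
    rw [← volume_preimage_coe_inter_Ioc hAm 0]
    exact measure_mono_null inter_subset_left h
  obtain ⟨x₀, -, hx₀⟩ :=
    exists_mem_tendsto_measure_compl_inter_div (AddCircle.measurable_mk' hAm) hA'
  set c : ℝ := K₁.toNNReal / (γ * (γ - 1))
  have hc : 0 ≤ c := div_nonneg K₁.toNNReal.2 (mul_nonneg (by linarith) (by linarith))
  have hbound (n : ℕ) : ∃ r, 0 < r ∧ r ≤ Real.exp c / γ ^ n ∧
      volume (B n)ᶜ ≤ ENNReal.ofReal (2 * Real.exp c ^ 2) *
        (volume (A'ᶜ ∩ closedBall x₀ r) / volume (closedBall x₀ r)) := by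
    obtain ⟨Φ, hlift, hΦ, hlb, hdist⟩ := exists_lift_compSeq hγ hT n
    have hpre : Φ ⁻¹' ((↑) ⁻¹' B n) = A' := by
      simp only [A', ← hAB n]
      ext x
      simp only [mem_preimage, hlift x]
    obtain ⟨r, hr, hrγ, hle⟩ := volume_Ioc_diff_le_of_hasBoundedDistortion hΦ
      (pow_pos (by linarith) n) hlb hdist hc (AddCircle.measurable_mk' (hB n)) x₀
    refine ⟨r, hr, hrγ, ?_⟩
    rwa [← volume_preimage_coe_inter_Ioc (hB n).compl (Φ x₀ - 1), sub_add_cancel,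
      preimage_compl, inter_comm, ← sdiff_eq, ← hpre]
  choose r hr hrγ hle using hbound
  have hr₀ : Tendsto r atTop (𝓝[>] 0) := by
    refine tendsto_nhdsWithin_iff.2 ⟨squeeze_zero (fun n => (hr n).le) hrγ ?_,
      Eventually.of_forall hr⟩
    simpa only [div_eq_mul_inv, ← inv_pow, mul_zero] using (tendsto_pow_atTop_nhds_zero_of_lt_one
      (inv_nonneg.2 (by linarith)) (inv_lt_one_of_one_lt₀ hγ)).const_mul (Real.exp c)
  refine tendsto_of_tendsto_of_tendsto_of_le_of_le tendsto_const_nhds ?_ (fun _ => bot_le) hle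
  simpa only [mul_zero, Function.comp_def] using ENNReal.Tendsto.const_mul (hx₀.comp hr₀)
    (Or.inr (ENNReal.ofReal_ne_top (r := 2 * Real.exp c ^ 2)))

theorem tail_sigma_algebra_trivial_general (γ K K₁ : ℝ)
    (h3 : 3 < γ)
    (T : ℕ → T1 → T1) (hT : ∀ n, ExpandingC1Lip (T n) γ K K₁)
    (A : Set T1)
    (hA : ∀ n : ℕ, 1 ≤ n →
      MeasurableSet[MeasurableSpace.comap (compSeq T n)
        (inferInstance : MeasurableSpace T1)] A) :
    volume A = 0 ∨ volume A = 1 := by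
  have hγ : 1 < γ := by linarith
  have hTc (n : ℕ) : Continuous (T n) := by
    obtain ⟨F, hF, hFd, -⟩ := hT n
    exact hF.continuous hFd.continuous
  have hAm : MeasurableSet A :=
    (continuous_compSeq hTc 1).measurable.comap_le _ (hA 1 le_rfl)
  have hpre (n : ℕ) : ∃ B, MeasurableSet B ∧ compSeq T n ⁻¹' B = A := by
    rcases n with _ | n
    · exact ⟨A, hAm, rfl⟩
    · exact MeasurableSpace.measurableSet_comap.1 (hA (n + 1) n.succ_pos)
  choose B hB hBA using hpre
  rw [← prob_compl_eq_zero_iff hAm]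
  by_contra! h
  have hB₀ := tendsto_volume_compl_of_compSeq_preimage_eq hγ hT h.1 hB hBA
  have hB₁ := tendsto_volume_compl_of_compSeq_preimage_eq hγ hT h.2 (fun n => (hB n).compl)
    (fun n => by rw [preimage_compl, hBA])
  have hsum := hB₁.add hB₀
  have hone (n : ℕ) : volume (B n) + volume (B n)ᶜ = 1 := prob_add_prob_compl (hB n)
  simp only [compl_compl, hone, add_zero] at hsum
  exact one_ne_zero (tendsto_nhds_unique tendsto_const_nhds hsum)

/-- exactness: the tail σ-algebra
`⋂_n (T_{1,n})⁻¹(ℬ)` of a sequence of `C^{1+Lip}` expanding circle maps is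
trivial for Lebesgue measure. -/
theorem tail_sigma_algebra_trivial (γ K K₁ : ℝ)
    (h3 : 3 < γ) (hγK : γ ≤ K) (hK₁ : 0 ≤ K₁)
    (T : ℕ → T1 → T1) (hT : ∀ n, ExpandingC1Lip (T n) γ K K₁)
    (A : Set T1)
    (hA : ∀ n : ℕ, 1 ≤ n →
      MeasurableSet[MeasurableSpace.comap (compSeq T n)
        (inferInstance : MeasurableSpace T1)] A) :
    volume A = 0 ∨ volume A = 1 :=
  tail_sigma_algebra_trivial_general γ K K₁ h3 T hT A hA

end DRW
end
end

section
/- Let Ḡ : 𝕋 → 𝕋 be continuous except possibly at the two endpoints of an arc W̄, piecewise C^{1+Lip} with |Ḡ′| ≥ γ > 1 on each piece, and suppose Ḡ has a fixed point x₀ with Ḡ(x₀) = x₀ at which the function τ̄ is locally constant (in particular this holds if x₀ is not an endpoint of W̄), where τ̄(x) = 3 for x ∈ W̄ and τ̄(x) = 1 for x ∉ W̄. Let h be an invariant probability density for Ḡ (P_Ḡ h = h, ∫_𝕋 h dx = 1) which is bounded and satisfies h(x) ≥ σ > 0 for all x, so that 1 < ∫_𝕋 τ̄ h dx < 3. Then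 τ̄ is not cohomologous to a constant under Ḡ: there is no function g of bounded variation on 𝕋 such that τ̄(x) − ∫_𝕋 τ̄(y) h(y) dy = g(x) − g(Ḡ(x)) for Lebesgue-almost every x ∈ 𝕋. -/
open MeasureTheory Set Filter
open scoped ENNReal NNReal

attribute [local instance] Classical.propDecidable

noncomputable section

/-!
Near the fixed point `x₀` the map `Ḡ` is a single expanding branch: `τ̄` jumps at both endpoints
of `W̄`, so local constancy of `τ̄` keeps `x₀` away from them. There `τ̄ - ∫ τ̄ h` is the constant
`ε = τ̄(x₀) - ∫ τ̄ h ≠ 0`. An expanding branch pulls Lebesgue-null sets back to null sets, so the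
cohomological equation holds along the first `n` iterates of almost every point, and the points
whose first `n` iterates stay near `x₀` form a neighbourhood of `x₀`; for such a point `x`,
telescoping gives `g x - g (Ḡⁿ x) = n ε`, which is incompatible with `|g x - g y| ≤ Var g`.
-/

open scoped Topology

namespace DRW

theorem abs_sub_le_eVar {g : T1 → ℝ} (hg : eVar g ≠ ⊤) (x y : T1) :
    |g x - g y| ≤ (eVar g).toReal := by
  obtain ⟨s, hs, rfl⟩ := AddCircle.eq_coe_Ico x
  obtain ⟨t, ht, rfl⟩ := AddCircle.eq_coe_Ico y
  have := eVariationOn.edist_le (fun r : ℝ => g r) (Ico_subset_Icc_self hs) (Ico_subset_Icc_self ht)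
  rw [edist_dist, Real.dist_eq] at this
  exact (ENNReal.ofReal_le_iff_le_toReal hg).1 this

theorem ae_coe_of_ae {p : T1 → Prop} (h : ∀ᵐ x, p x) : ∀ᵐ t : ℝ, p t := by
  rw [← Measure.restrict_univ (μ := (volume : Measure ℝ)), ← iUnion_Ioc_intCast,
    ae_restrict_iUnion_iff]
  exact fun n => (UnitAddCircle.measurePreserving_mk n).quasiMeasurePreserving.ae h

theorem _root_.AntilipschitzWith.quasiMeasurePreserving_hausdorffMeasure {X Y : Type*}
    [EMetricSpace X] [MeasurableSpace X] [BorelSpace X]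
    [EMetricSpace Y] [MeasurableSpace Y] [BorelSpace Y]
    {f : X → Y} {K : ℝ≥0} (hf : AntilipschitzWith K f) (hfm : Measurable f) {d : ℝ} (hd : 0 ≤ d) :
    Measure.QuasiMeasurePreserving f μH[d] μH[d] := by
  refine ⟨hfm, Measure.AbsolutelyContinuous.mk fun s hs hs0 => ?_⟩
  rw [Measure.map_apply hfm hs]
  exact le_antisymm ((hf.hausdorffMeasure_preimage_le hd s).trans (by rw [hs0, mul_zero])) zero_le

theorem mul_abs_sub_le_abs_sub_of_le_abs_deriv {F : ℝ → ℝ} (hF : Differentiable ℝ F) {γ : ℝ}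
    (hd : ∀ x, γ ≤ |deriv F x|) (x y : ℝ) : γ * |x - y| ≤ |F x - F y| := by
  wlog hxy : x < y generalizing x y
  · rcases (not_lt.1 hxy).eq_or_lt with rfl | hyx
    · simp
    · simpa only [abs_sub_comm] using this y x hyx
  obtain ⟨c, -, hc⟩ := exists_deriv_eq_slope F hxy hF.continuous.continuousOn
    fun z _ => (hF z).differentiableWithinAt
  have hpos : 0 < y - x := sub_pos.2 hxy
  rw [eq_div_iff hpos.ne'] at hc
  rw [abs_sub_comm x, abs_sub_comm (F x), ← hc, abs_mul, abs_of_pos hpos]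
  exact mul_le_mul_of_nonneg_right (hd c) hpos.le

theorem quasiMeasurePreserving_of_le_abs_deriv {F : ℝ → ℝ} (hF : Differentiable ℝ F) {γ : ℝ}
    (hγ : 0 < γ) (hd : ∀ x, γ ≤ |deriv F x|) : Measure.QuasiMeasurePreserving F := by
  have hanti : AntilipschitzWith (Real.toNNReal γ⁻¹) F := by
    refine AntilipschitzWith.of_le_mul_dist fun x y => ?_
    rw [Real.coe_toNNReal _ (inv_nonneg.2 hγ.le), Real.dist_eq, Real.dist_eq,
      inv_mul_eq_div, le_div_iff₀ hγ, mul_comm]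
    exact mul_abs_sub_le_abs_sub_of_le_abs_deriv hF hd x y
  simpa only [hausdorffMeasure_real] using
    hanti.quasiMeasurePreserving_hausdorffMeasure hF.continuous.measurable zero_le_one

theorem eq_zero_of_sub_comp_eq_near_fixedPoint {X : Type*} [TopologicalSpace X]
    [MeasurableSpace X] {μ : Measure X} [μ.IsOpenPosMeasure] {F : X → X} (hFc : Continuous F)
    (hF : Measure.QuasiMeasurePreserving F μ μ) {x : X} (hx : F x = x) {u : X → ℝ} {C : ℝ}
    (hu : ∀ s t, |u s - u t| ≤ C) {ε : ℝ} {U : Set X} (hU : U ∈ 𝓝 x)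
    (h : ∀ᵐ t ∂μ, t ∈ U → u t - u (F t) = ε) : ε = 0 := by
  have hae : ∀ᵐ t ∂μ, ∀ k, F^[k] t ∈ U → u (F^[k] t) - u (F^[k + 1] t) = ε :=
    ae_all_iff.2 fun k => by
      simpa only [Function.iterate_succ_apply'] using (hF.iterate k).ae h
  have hbound : ∀ n : ℕ, n * |ε| ≤ C := by
    intro n
    have horbit : ∀ᶠ t in 𝓝 x, ∀ k < n, F^[k] t ∈ U :=
      (Filter.eventually_all_finite (Set.finite_lt_nat n)).2 fun k _ =>
        ((hFc.iterate k).tendsto' x x (Function.iterate_fixed hx k)).eventually hU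
    obtain ⟨t, htU, hteq⟩ := mem_closure_iff_nhds.1 (Measure.dense_of_ae hae x) _ horbit
    have htel : u t - u (F^[n] t) = n * ε :=
      calc u t - u (F^[n] t) = ∑ k ∈ Finset.range n, (u (F^[k] t) - u (F^[k + 1] t)) :=
            (Finset.sum_range_sub' (fun k => u (F^[k] t)) n).symm
        _ = n * ε := by
          rw [Finset.sum_congr rfl fun k hk => hteq k (htU k (Finset.mem_range.1 hk))]
          simp
    calc n * |ε| = |u t - u (F^[n] t)| := by rw [htel, abs_mul, Nat.abs_cast]
      _ ≤ C := hu _ _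
  by_contra hε
  obtain ⟨n, hn⟩ := exists_nat_gt (C / |ε|)
  rw [div_lt_iff₀ (abs_pos.2 hε)] at hn
  exact (hbound n).not_gt hn

section Arc

variable {W : Set T1} {a l : ℝ}

theorem IsArc.length_lt_one (hW : IsArc W a l) (hne : W ≠ univ) : l < 1 := by
  obtain ⟨-, hl1, rfl⟩ := hW
  refine hl1.lt_of_ne fun hl => hne ?_
  rw [hl]
  exact AddCircle.coe_image_Ico_eq 1 a

theorem IsArc.coe_mem_iff (hW : IsArc W a l) {t : ℝ} (ht : t ∈ Ico (a + l - 1) (a + l)) :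
    (t : T1) ∈ W ↔ a ≤ t := by
  obtain ⟨-, hl1, rfl⟩ := hW
  refine ⟨fun ⟨s, hs, hst⟩ => ?_, fun hat => ⟨t, ⟨hat, ht.2⟩, rfl⟩⟩
  have hs' : s ∈ Ico (a + l - 1) (a + l - 1 + 1) := ⟨by linarith [hs.1], by linarith [hs.2]⟩
  have ht' : t ∈ Ico (a + l - 1) (a + l - 1 + 1) := by rwa [sub_add_cancel]
  rw [AddCircle.coe_eq_coe_iff_of_mem_Ico hs' ht'] at hst
  exact hst ▸ hs.1

theorem IsArc.ne_endpoints_of_eventually_tauBar_eq (hW : IsArc W a l) (hl1 : l < 1) {x : ℝ}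
    (hloc : ∀ᶠ t : ℝ in 𝓝 x, tauBar W t = tauBar W x) : x ≠ a ∧ x ≠ a + l := by
  have hl := hW.1
  have htau (t : ℝ) (ht : t ∈ Ico (a + l - 1) (a + l)) :
      tauBar W t = if a ≤ t then 3 else 1 := by
    simp only [tauBar, hW.coe_mem_iff ht]
  -- `τ̄` jumps from `1` to `3` at `a` and from `3` to `1` at `a + l`: look just to the left.
  have hleft (b : ℝ) (hb : b < x) : ∃ s ∈ Ioo b x, tauBar W s = tauBar W x :=
    ((hloc.filter_mono nhdsWithin_le_nhds).and (Ioo_mem_nhdsLT hb)).exists.imp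
      fun _ hs => ⟨hs.2, hs.1⟩
  constructor
  · rintro rfl
    obtain ⟨s, hs, hτ⟩ := hleft (x + l - 1) (by linarith)
    rw [htau s ⟨hs.1.le, by linarith [hs.2]⟩, htau x ⟨by linarith, by linarith⟩,
      if_neg hs.2.not_ge, if_pos le_rfl] at hτ
    norm_num at hτ
  · rintro rfl
    obtain ⟨s, hs, hτ⟩ := hleft a (by linarith)
    have hcoe : ((a + l : ℝ) : T1) = ((a + l - 1 : ℝ) : T1) := by
      simpa using AddCircle.coe_add_period (1 : ℝ) (a + l - 1)
    rw [hcoe, htau s ⟨by linarith [hs.1], hs.2⟩, htau (a + l - 1) ⟨le_rfl, by linarith⟩,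
      if_pos hs.1.le, if_neg (by linarith)] at hτ
    norm_num at hτ

end Arc

theorem PiecewiseC1LipArcLB.piecewiseExpandingArcLB {G : T1 → T1} {a l γ : ℝ}
    (hG : PiecewiseC1LipArcLB G a l γ) : PiecewiseExpandingArcLB G a l γ :=
  let ⟨F₁, F₂, _, hF₁, hF₂, hd₁, hd₂, _, _, hG₁, hG₂⟩ := hG
  ⟨F₁, F₂, hF₁, hF₂, hd₁, hd₂, hG₁, hG₂⟩

theorem PiecewiseExpandingArcLB.exists_local_lift {G : T1 → T1} {a l γ : ℝ}
    (hG : PiecewiseExpandingArcLB G a l γ) {x : ℝ}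
    (hx : x ∈ Ioo a (a + l) ∪ Ioo (a + l) (a + 1)) :
    ∃ F : ℝ → ℝ, Differentiable ℝ F ∧ (∀ y, γ ≤ |deriv F y|) ∧
      ∀ᶠ t : ℝ in 𝓝 x, G t = F t := by
  obtain ⟨F₁, F₂, hF₁, hF₂, hd₁, hd₂, hG₁, hG₂⟩ := hG
  rcases hx with hx | hx
  · exact ⟨F₁, hF₁, hd₁, eventually_of_mem (Ioo_mem_nhds hx.1 hx.2) hG₁⟩
  · exact ⟨F₂, hF₂, hd₂, eventually_of_mem (Ioo_mem_nhds hx.1 hx.2) hG₂⟩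

theorem exists_local_lift_fixing {G : T1 → T1} {γ x : ℝ} {F : ℝ → ℝ} (hF : Differentiable ℝ F)
    (hd : ∀ y, γ ≤ |deriv F y|) (hGF : ∀ᶠ t : ℝ in 𝓝 x, G t = F t) (hfix : G x = x) :
    ∃ F' : ℝ → ℝ, F' x = x ∧ Differentiable ℝ F' ∧ (∀ y, γ ≤ |deriv F' y|) ∧
      ∀ᶠ t : ℝ in 𝓝 x, G t = F' t := by
  have hFx : ((F x : ℝ) : T1) = x := hGF.self_of_nhds ▸ hfix
  refine ⟨fun t => F t - F x + x, by ring, (hF.sub_const _).add_const _, fun y => ?_, ?_⟩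
  · simpa only [deriv_add_const, deriv_sub_const] using hd y
  · filter_upwards [hGF] with t ht
    rw [ht, AddCircle.coe_add, AddCircle.coe_sub, hFx, sub_add_cancel]

theorem exists_expanding_lift_at_fixedPoint {G : T1 → T1} {W : Set T1} {a l γ : ℝ}
    (hW : IsArc W a l) (hl1 : l < 1) (hG : PiecewiseExpandingArcLB G a l γ) {x₀ : T1}
    (hfix : G x₀ = x₀) (hloc : ∀ᶠ y in 𝓝 x₀, tauBar W y = tauBar W x₀) :
    ∃ (x : ℝ) (F : ℝ → ℝ), (x : T1) = x₀ ∧ F x = x ∧ Differentiable ℝ F ∧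
      (∀ y, γ ≤ |deriv F y|) ∧ ∀ᶠ t : ℝ in 𝓝 x, G t = F t := by
  obtain ⟨x, hx, rfl⟩ : ∃ x ∈ Ico a (a + 1), (x : T1) = x₀ :=
    ⟨_, (AddCircle.equivIco 1 a x₀).2, (AddCircle.equivIco 1 a).symm_apply_apply x₀⟩
  obtain ⟨hxa, hxal⟩ := hW.ne_endpoints_of_eventually_tauBar_eq hl1
    (((AddCircle.continuous_mk' 1).tendsto x).eventually hloc)
  have hbranch : x ∈ Ioo a (a + l) ∪ Ioo (a + l) (a + 1) := by
    rcases hxal.lt_or_gt with h | h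
    · exact Or.inl ⟨hx.1.lt_of_ne' hxa, h⟩
    · exact Or.inr ⟨h, hx.2⟩
  obtain ⟨F, hF, hd, hGF⟩ := hG.exists_local_lift hbranch
  exact ⟨x, exists_local_lift_fixing hF hd hGF hfix |>.imp fun _ h => ⟨rfl, h⟩⟩

theorem tau_not_coboundary_general (γ : ℝ) (hγ : 1 < γ)
    (Gbar : T1 → T1) (Wbar : Set T1) (a l : ℝ)
    (hW : IsArc Wbar a l) (hG : PiecewiseC1LipArcLB Gbar a l γ)
    (x₀ : T1) (hfix : Gbar x₀ = x₀)
    (hloc : ∀ᶠ y in nhds x₀, tauBar Wbar y = tauBar Wbar x₀)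
    (h : T1 → ℝ)
    (hprob : (∫ x : T1, h x) = 1)
    (hmean1 : 1 < ∫ x : T1, tauBar Wbar x * h x)
    (hmean3 : (∫ x : T1, tauBar Wbar x * h x) < 3) :
    ¬ ∃ g : T1 → ℝ, eVar g ≠ ⊤ ∧
      ∀ᵐ x ∂(volume : Measure T1),
        tauBar Wbar x - ∫ y : T1, tauBar Wbar y * h y = g x - g (Gbar x) := by
  rintro ⟨g, hg, hcob⟩
  have hl1 : l < 1 := hW.length_lt_one fun hWuniv => by
    simp [tauBar, hWuniv, integral_const_mul, hprob] at hmean3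
  obtain ⟨x, F, rfl, hFx, hF, hd, hGF⟩ :=
    exists_expanding_lift_at_fixedPoint hW hl1 hG.piecewiseExpandingArcLB hfix hloc
  have hτ : ∀ᶠ t : ℝ in 𝓝 x, tauBar Wbar t = tauBar Wbar x :=
    ((AddCircle.continuous_mk' 1).tendsto x).eventually hloc
  have hε := eq_zero_of_sub_comp_eq_near_fixedPoint (u := fun t : ℝ => g t) hF.continuous
    (quasiMeasurePreserving_of_le_abs_deriv hF (by linarith) hd) hFx
    (fun s t => abs_sub_le_eVar hg s t) (hGF.and hτ) <| by
      filter_upwards [ae_coe_of_ae hcob] with t ht ⟨hGt, hτt⟩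
      rw [← hGt, ← ht, hτt]
  rw [tauBar] at hε
  rcases ite_eq_or_eq ((x : T1) ∈ Wbar) (3 : ℝ) 1 with hτx | hτx <;> linarith

/-- Lemma 6.2: the return time `τ̄` is not cohomologous to a
constant under `Ḡ`. -/
theorem tau_not_coboundary (γ : ℝ) (hγ : 1 < γ)
    (Gbar : T1 → T1) (Wbar : Set T1) (a l : ℝ)
    (hW : IsArc Wbar a l) (hG : PiecewiseC1LipArcLB Gbar a l γ)
    (x₀ : T1) (hfix : Gbar x₀ = x₀)
    (hloc : ∀ᶠ y in nhds x₀, tauBar Wbar y = tauBar Wbar x₀)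
    (h : T1 → ℝ) (hmeas : Measurable h)
    (hinv : ∀ φ : T1 → ℝ, Measurable φ → (∃ M, ∀ x, |φ x| ≤ M) →
      (∫ x : T1, φ (Gbar x) * h x) = ∫ x : T1, φ x * h x)
    (hprob : (∫ x : T1, h x) = 1)
    (hbdd : ∃ M, ∀ x, h x ≤ M)
    (σ : ℝ) (hσ : 0 < σ) (hpos : ∀ x, σ ≤ h x)
    (hmean1 : 1 < ∫ x : T1, tauBar Wbar x * h x)
    (hmean3 : (∫ x : T1, tauBar Wbar x * h x) < 3) :
    ¬ ∃ g : T1 → ℝ, eVar g ≠ ⊤ ∧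
      ∀ᵐ x ∂(volume : Measure T1),
        tauBar Wbar x - ∫ y : T1, tauBar Wbar y * h y = g x - g (Gbar x) :=
  tau_not_coboundary_general γ hγ Gbar Wbar a l hW hG x₀ hfix hloc h hprob hmean1 hmean3

end DRW
end
end
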